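/- Two-shift decomposition of the check loss: For every τ ∈ (0,1) and all real numbers ε, a₁, a₂, ρ_τ(ε − a₁) − ρ_τ(ε − a₂) = (a₁ − a₂)·ψ_τ(ε) + ∫_{a₂}^{a₁} (1{ε ≤ s} − 1{ε ≤ 0}) ds. Consequently, for any finite sequence ε_1,…,ε_T of reals, ∑_{t=1}^T [ρ_τ(ε_t − a₁) − ρ_τ(ε_t − a₂)] = (a₁ − a₂) ∑_{t=1}^T ψ_τ(ε_t) + ∑_{t=1}^T ∫_{a₂}^{a₁} (1{ε_t ≤ s} − 1{ε_t ≤ 0}) ds. -/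

import Mathlib

open MeasureTheory

/-- The quantile check function `ρ_τ(u) = u (τ - 1{u ≤ 0})`. -/
noncomputable def rho (τ u : ℝ) : ℝ := u * (τ - if u ≤ 0 then 1 else 0)

/-- The quantile score function `ψ_τ(u) = 1{u ≤ 0} - τ`. -/
noncomputable def psi (τ u : ℝ) : ℝ := (if u ≤ 0 then 1 else 0) - τ

/-!
Since `ρ_τ(u) = τ u + max (-u) 0`, the difference `ρ_τ(ε - a₁) - ρ_τ(ε - a₂)` equals
`-τ (a₁ - a₂) + (max a₁ ε - max a₂ ε)`. The function `s ↦ max s ε` has right derivative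
`1{ε ≤ s}` at every point, so by the fundamental theorem of calculus its increment from `a₂`
to `a₁` is `∫_{a₂}^{a₁} 1{ε ≤ s} ds`; subtracting `(a₁ - a₂) 1{ε ≤ 0}` gives the identity.
-/

lemma rho_sub_eq_max (τ ε a : ℝ) : rho τ (ε - a) = max a ε - ε + τ * (ε - a) := by
  unfold rho
  rcases le_total a ε with h | h
  · rw [max_eq_right h]
    split_ifs <;> linarith
  · rw [max_eq_left h, if_pos (sub_nonpos.2 h)]
    ring

lemma monotone_ite_le (ε : ℝ) : Monotone fun s : ℝ => if ε ≤ s then (1 : ℝ) else 0 := by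
  intro s t hst
  dsimp only
  split_ifs <;> grind

lemma hasDerivWithinAt_max_Ioi (ε t : ℝ) :
    HasDerivWithinAt (fun s => max s ε) (if ε ≤ t then 1 else 0) (Set.Ioi t) t := by
  split_ifs with h
  · exact (hasDerivWithinAt_id t _).congr (fun s hs => max_eq_left (h.trans (le_of_lt hs)))
      (max_eq_left h)
  · have hconst : (fun s => max s ε) =ᶠ[nhds t] fun _ => ε :=
      Filter.mem_of_superset (Iio_mem_nhds (not_le.1 h)) fun s hs => max_eq_right (le_of_lt hs)
    exact ((hasDerivAt_const t ε).congr_of_eventuallyEq hconst).hasDerivWithinAt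

lemma integral_ite_le_eq_max_sub_max (ε a b : ℝ) :
    ∫ s in b..a, (if ε ≤ s then (1 : ℝ) else 0) = max a ε - max b ε :=
  intervalIntegral.integral_eq_sub_of_hasDeriv_right
    (continuous_id.max continuous_const).continuousOn
    (fun t _ => hasDerivWithinAt_max_Ioi ε t) (monotone_ite_le ε).intervalIntegrable

lemma rho_sub_rho_eq (τ ε a₁ a₂ : ℝ) :
    rho τ (ε - a₁) - rho τ (ε - a₂)
      = (a₁ - a₂) * psi τ ε
        + ∫ s in a₂..a₁, ((if ε ≤ s then (1 : ℝ) else 0) - if ε ≤ 0 then 1 else 0) := by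
  rw [intervalIntegral.integral_sub (monotone_ite_le ε).intervalIntegrable intervalIntegrable_const,
    integral_ite_le_eq_max_sub_max, intervalIntegral.integral_const, smul_eq_mul,
    rho_sub_eq_max, rho_sub_eq_max, psi]
  ring

theorem check_loss_two_shift_general (τ : ℝ) :
    (∀ ε a₁ a₂ : ℝ,
        rho τ (ε - a₁) - rho τ (ε - a₂)
          = (a₁ - a₂) * psi τ ε
            + ∫ s in a₂..a₁,
                ((if ε ≤ s then (1 : ℝ) else 0) - if ε ≤ 0 then 1 else 0))
    ∧ ∀ (T : ℕ) (ε : Fin T → ℝ) (a₁ a₂ : ℝ),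
        ∑ t, (rho τ (ε t - a₁) - rho τ (ε t - a₂))
          = (a₁ - a₂) * ∑ t, psi τ (ε t)
            + ∑ t, ∫ s in a₂..a₁,
                ((if ε t ≤ s then (1 : ℝ) else 0) - if ε t ≤ 0 then 1 else 0) := by
  refine ⟨rho_sub_rho_eq τ, fun T ε a₁ a₂ => ?_⟩
  simp only [rho_sub_rho_eq τ, Finset.sum_add_distrib, Finset.mul_sum]

/-- Two-shift decomposition of the check loss, pointwise and summed over a
finite sequence. -/
theorem check_loss_two_shift (τ : ℝ) (hτ : τ ∈ Set.Ioo (0 : ℝ) 1) :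
    (∀ ε a₁ a₂ : ℝ,
        rho τ (ε - a₁) - rho τ (ε - a₂)
          = (a₁ - a₂) * psi τ ε
            + ∫ s in a₂..a₁,
                ((if ε ≤ s then (1 : ℝ) else 0) - if ε ≤ 0 then 1 else 0))
    ∧ ∀ (T : ℕ) (ε : Fin T → ℝ) (a₁ a₂ : ℝ),
        ∑ t, (rho τ (ε t - a₁) - rho τ (ε t - a₂))
          = (a₁ - a₂) * ∑ t, psi τ (ε t)
            + ∑ t, ∫ s in a₂..a₁,
                ((if ε t ≤ s then (1 : ℝ) else 0) - if ε t ≤ 0 then 1 else 0) :=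
  check_loss_two_shift_general τ
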